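/- Let {x_n} be an exact system in a Hilbert space H with biorthogonal system {x̃_n}. Then {x_n} is hereditarily complete (i.e., every x ∈ H lies in the closed span of {⟨x, x̃_n⟩ x_n}) if and only if for every partition of the index set N into disjoint sets N₁ and N₂, the mixed system {x_n}_{n∈N₁} ∪ {x̃_n}_{n∈N₂} is complete in H. -/

import Mathlib

open scoped InnerProductSpace

/-! If `v` lies in the closed span `K` of `{⟪x̃ n, v⟫ • x n}` and is orthogonal to the mixed
system with `N₁` arbitrary, then `v` is orthogonal to every generator of `K`, hence `v = 0`.
Conversely, take `N₁ = {n | ⟪x̃ n, v⟫ ≠ 0}` and write `v = y + z` with `y ∈ K`, `z ⊥ K`. Then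
`x n ∈ K` for `n ∈ N₁`, while biorthogonality makes `x̃ n ⊥ K` for `n ∉ N₁`, where also
`⟪x̃ n, v⟫ = 0`; so `z` is orthogonal to the mixed system, which is complete, and `v = y ∈ K`. -/

section

open Submodule Set

variable {𝕜 E ι : Type*} [RCLike 𝕜] [NormedAddCommGroup E] [InnerProductSpace 𝕜 E]

theorem Submodule.mem_orthogonal_span_iff {s : Set E} {v : E} :
    v ∈ (span 𝕜 s)ᗮ ↔ ∀ u ∈ s, ⟪u, v⟫_𝕜 = 0 := by
  rw [← span_singleton_le_iff_mem, ← isOrtho_iff_le, isOrtho_comm, isOrtho_span]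
  simp

theorem Submodule.eq_zero_of_mem_topologicalClosure_of_mem_orthogonal {K : Submodule 𝕜 E}
    {v : E} (hK : v ∈ K.topologicalClosure) (hKperp : v ∈ Kᗮ) : v = 0 := by
  rw [← K.orthogonal_closure] at hKperp
  exact inner_self_eq_zero.mp (inner_right_of_mem_orthogonal hK hKperp)

theorem eq_zero_of_mem_closure_span_smul_of_mem_orthogonal_mixed (x xt : ι → E) (N₁ : Set ι)
    {v : E} (hv : v ∈ (span 𝕜 (range fun n => ⟪xt n, v⟫_𝕜 • x n)).topologicalClosure)
    (hperp : v ∈ (span 𝕜 (x '' N₁ ∪ xt '' N₁ᶜ))ᗮ) : v = 0 := by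
  refine eq_zero_of_mem_topologicalClosure_of_mem_orthogonal hv ?_
  rw [mem_orthogonal_span_iff] at hperp ⊢
  rintro _ ⟨n, rfl⟩
  rw [inner_smul_left]
  by_cases hn : n ∈ N₁
  · rw [hperp (x n) (Or.inl (mem_image_of_mem x hn)), mul_zero]
  · rw [hperp (xt n) (Or.inr (mem_image_of_mem xt hn)), map_zero, zero_mul]

theorem mem_orthogonal_closure_span_smul_of_coeff_eq_zero {x xt : ι → E}
    (hxt : ∀ m n, m ≠ n → ⟪x m, xt n⟫_𝕜 = 0) (c : ι → 𝕜) {n : ι} (hn : c n = 0) :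
    xt n ∈ (span 𝕜 (range fun m => c m • x m)).topologicalClosureᗮ := by
  rw [orthogonal_closure, mem_orthogonal_span_iff]
  rintro _ ⟨m, rfl⟩
  rw [inner_smul_left]
  obtain rfl | hmn := eq_or_ne m n
  · rw [hn, map_zero, zero_mul]
  · rw [hxt m n hmn, mul_zero]

theorem mem_closure_span_smul_of_orthogonal_mixed_eq_bot [CompleteSpace E] {x xt : ι → E}
    (hxt : ∀ m n, m ≠ n → ⟪x m, xt n⟫_𝕜 = 0) (v : E)
    (hmix : (span 𝕜 (x '' {n | ⟪xt n, v⟫_𝕜 ≠ 0} ∪ xt '' {n | ⟪xt n, v⟫_𝕜 ≠ 0}ᶜ))ᗮ = ⊥) :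
    v ∈ (span 𝕜 (range fun n => ⟪xt n, v⟫_𝕜 • x n)).topologicalClosure := by
  set K := (span 𝕜 (range fun n => ⟪xt n, v⟫_𝕜 • x n)).topologicalClosure
  have : CompleteSpace K := (isClosed_topologicalClosure _).completeSpace_coe
  obtain ⟨y, hy, z, hz, rfl⟩ := K.exists_add_mem_mem_orthogonal v
  suffices hzmix : z ∈ (span 𝕜 (x '' {n | ⟪xt n, y + z⟫_𝕜 ≠ 0} ∪
      xt '' {n | ⟪xt n, y + z⟫_𝕜 ≠ 0}ᶜ))ᗮ by
    rw [hmix, mem_bot] at hzmix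
    rwa [hzmix, add_zero]
  rw [mem_orthogonal_span_iff]
  rintro _ (⟨n, hn, rfl⟩ | ⟨n, hn, rfl⟩)
  · have hxK : x n ∈ K :=
      (smul_mem_iff K hn).mp (le_topologicalClosure _ (subset_span ⟨n, rfl⟩))
    exact inner_right_of_mem_orthogonal hxK hz
  · have hvn : ⟪xt n, y + z⟫_𝕜 = 0 := not_not.mp hn
    have hyn : ⟪xt n, y⟫_𝕜 = 0 :=
      inner_left_of_mem_orthogonal hy (mem_orthogonal_closure_span_smul_of_coeff_eq_zero hxt _ hvn)
    rwa [inner_add_right, hyn, zero_add] at hvn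

end

theorem hereditarily_complete_iff_mixed_systems_complete_general
    {H : Type*} [NormedAddCommGroup H] [InnerProductSpace ℂ H] [CompleteSpace H]
    (x xt : ℕ → H)
    (hbi : ∀ m n : ℕ, ⟪x m, xt n⟫_ℂ = if m = n then 1 else 0) :
    (∀ v : H, v ∈ (Submodule.span ℂ
        (Set.range (fun n => ⟪xt n, v⟫_ℂ • x n))).topologicalClosure)
      ↔ ∀ N₁ : Set ℕ,
        (Submodule.span ℂ (x '' N₁ ∪ xt '' N₁ᶜ)).topologicalClosure = ⊤ := by
  simp_rw [Submodule.topologicalClosure_eq_top_iff]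
  constructor
  · intro hher N₁
    rw [eq_bot_iff]
    intro v hv
    exact eq_zero_of_mem_closure_span_smul_of_mem_orthogonal_mixed x xt N₁ (hher v) hv
  · intro hmix v
    have hxt : ∀ m n, m ≠ n → ⟪x m, xt n⟫_ℂ = 0 := fun m n hmn => by rw [hbi, if_neg hmn]
    exact mem_closure_span_smul_of_orthogonal_mixed_eq_bot hxt v (hmix _)

/-- An exact system is hereditarily complete iff for every partition N = N₁ ∪ N₂
the mixed system {x_n}_{N₁} ∪ {x̃_n}_{N₂} is complete. -/
theorem hereditarily_complete_iff_mixed_systems_complete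
    {H : Type*} [NormedAddCommGroup H] [InnerProductSpace ℂ H] [CompleteSpace H]
    (x xt : ℕ → H)
    (hcomplete : (Submodule.span ℂ (Set.range x)).topologicalClosure = ⊤)
    (hminimal : ∀ n₀ : ℕ,
      x n₀ ∉ (Submodule.span ℂ (x '' {n | n ≠ n₀})).topologicalClosure)
    (hbi : ∀ m n : ℕ, ⟪x m, xt n⟫_ℂ = if m = n then 1 else 0) :
    (∀ v : H, v ∈ (Submodule.span ℂ
        (Set.range (fun n => ⟪xt n, v⟫_ℂ • x n))).topologicalClosure)
      ↔ ∀ N₁ : Set ℕ,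
        (Submodule.span ℂ (x '' N₁ ∪ xt '' N₁ᶜ)).topologicalClosure = ⊤ :=
  hereditarily_complete_iff_mixed_systems_complete_general x xt hbi
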